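/- Let 𝒱₁ = ℝ^d, 𝒱₂ = ℝ^e, 𝒱 = 𝒱₁ ⊕ 𝒱₂, let 1/4 < α ≤ 1/3 and 1/3 < γ ≤ 1/2 with 2α + γ > 1, and let (Ξ¹, Ξ², B³) and (Ξ̃¹, Ξ̃², B̃³) be anisotropic rough paths of roughness (α, γ) on [0,T], both of whose seven component Hölder norms are bounded by a common constant M > 0. Suppose moreover that max{ ‖B¹−B̃¹‖_α, ‖B²−B̃²‖_{2α}, ‖B³−B̃³‖_{3α}, ‖W¹−W̃¹‖_γ, ‖W²−W̃²‖_{2γ}, ‖I[B,W]−I[B̃,W̃]‖_{α+γ}, ‖I[W,B]−I[W̃,B̃]‖_{α+γ} } ≤ ε for some ε > 0. Then there is a constant C′ = C′(M, α, γ) > 0, independent of ε, such that for every (i,j,k) ∈ {1,2}³ with (i,j,k) ≠ (1,1,1) the level-3 extensions satisfy ‖Ξ^{3,[ijk]} − Ξ̃^{3,[ijk]}‖_δ ≤ C′ ε, where δ := (6−i−j−k)α + (i+j+k−3)γ. In particular, the extension map (Ξ¹, Ξ², B³) ↦ (Ξ¹, Ξ², Ξ³) is locally Lipschitz continuous from anisotropic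 rough paths of roughness (α,γ) into α-Hölder rough paths over 𝒱. -/

import Mathlib

/-!
Each component `Ξ^{3,[ijk]}` is the sewing of the germ `Ξ¹_{s,u} ⊗ Ξ²_{u,v} + Ξ²_{s,u} ⊗ Ξ¹_{u,v}`.
By Chen's relations the defect of this germ on `u ≤ v ≤ w` is
`-(Ξ¹_{u,v} ⊗ Ξ²_{v,w} + Ξ²_{u,v} ⊗ Ξ¹_{v,w})`, which does not involve the base point `s`.
Writing `x ⊗ y - x̃ ⊗ ỹ = (x - x̃) ⊗ y + x̃ ⊗ (y - ỹ)`, the defect of the difference of the germs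
of the two paths is at most `4 M ε (w - u)^δ`, and `δ > 1` because `2α + γ > 1` and `α ≤ γ`.
The sewing lemma then bounds `‖Ξ^{3,[ijk]}_{s,t} - Ξ̃^{3,[ijk]}_{s,t}‖` by
`(1 - 2^{1-δ})⁻¹ · 4 M ε (t - s)^δ`, and this constant is largest for `δ = 2α + γ`.
-/

noncomputable section

open MeasureTheory Finset

/-- Coordinatewise description of a Euclidean vector. -/
def euc {ι : Type*} (f : ι → ℝ) : EuclideanSpace ℝ ι := WithLp.toLp 2 f

/-- Two-parameter `δ`-Hölder bound on `[a,b]` with constant `C`. -/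
def HolderBnd2 {E : Type*} [NormedAddCommGroup E] (C δ a b : ℝ) (η : ℝ → ℝ → E) : Prop :=
  ∀ s t : ℝ, a ≤ s → s ≤ t → t ≤ b → ‖η s t‖ ≤ C * (t - s) ^ δ

/-- A partition of the interval `[s,t]`. -/
structure RSPartition (s t : ℝ) where
  n : ℕ
  pts : ℕ → ℝ
  pos : 0 < n
  first : pts 0 = s
  last : pts n = t
  mono : ∀ i < n, pts i ≤ pts (i + 1)

/-- The mesh of the partition is at most `δ`. -/
def RSPartition.MeshLE {s t : ℝ} (P : RSPartition s t) (δ : ℝ) : Prop :=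
  ∀ i < P.n, P.pts (i + 1) - P.pts i ≤ δ

/-- `J` is the limit of the Riemann-type sums of `f` over partitions of `[s,t]`. -/
def RSLimit {E : Type*} [NormedAddCommGroup E] (s t : ℝ)
    (f : ℝ → ℝ → E) (J : E) : Prop :=
  ∀ ε > 0, ∃ δ > 0, ∀ P : RSPartition s t, P.MeshLE δ →
    ‖(∑ i ∈ Finset.range P.n, f (P.pts i) (P.pts (i + 1))) - J‖ ≤ ε

/-- The simplex `Δ_{[0,T]}` as a subset of `ℝ²`. -/
def simplex (T : ℝ) : Set (ℝ × ℝ) := {p | 0 ≤ p.1 ∧ p.1 ≤ p.2 ∧ p.2 ≤ T}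

open Filter Topology

section Sewing

variable {E : Type*} [NormedAddCommGroup E]

def sewingConst (θ : ℝ) : ℝ := (1 - 2 ^ (1 - θ))⁻¹

lemma two_rpow_one_sub_lt_one {θ : ℝ} (hθ : 1 < θ) : (2 : ℝ) ^ (1 - θ) < 1 :=
  Real.rpow_lt_one_of_one_lt_of_neg one_lt_two (by linarith)

lemma sewingConst_pos {θ : ℝ} (hθ : 1 < θ) : 0 < sewingConst θ :=
  inv_pos.mpr (sub_pos.mpr (two_rpow_one_sub_lt_one hθ))

lemma sewingConst_anti {θ θ' : ℝ} (hθ : 1 < θ) (hθθ' : θ ≤ θ') :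
    sewingConst θ' ≤ sewingConst θ := by
  have : (2 : ℝ) ^ (1 - θ') ≤ 2 ^ (1 - θ) :=
    Real.rpow_le_rpow_of_exponent_le one_le_two (by linarith)
  exact inv_anti₀ (sub_pos.mpr (two_rpow_one_sub_lt_one hθ)) (by linarith)

lemma sum_range_two_mul {M : Type*} [AddCommMonoid M] (n : ℕ) (f : ℕ → M) :
    ∑ i ∈ range (2 * n), f i = ∑ i ∈ range n, (f (2 * i) + f (2 * i + 1)) := by
  induction n with
  | zero => simp
  | succ n ih => rw [Nat.mul_succ, sum_range_succ, sum_range_succ, ih, sum_range_succ, add_assoc]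

lemma two_pow_mul_div_two_pow_rpow {x : ℝ} (hx : 0 ≤ x) (θ : ℝ) (m : ℕ) :
    2 ^ m * (x / 2 ^ m) ^ θ = x ^ θ * ((2 : ℝ) ^ (1 - θ)) ^ m := by
  rw [Real.div_rpow hx (by positivity), ← Real.rpow_natCast, ← Real.rpow_natCast,
    ← Real.rpow_mul zero_le_two, ← Real.rpow_mul zero_le_two, mul_div_assoc', mul_comm,
    mul_div_assoc, ← Real.rpow_sub two_pos]
  congr 2
  ring

def dyadicPt (s t : ℝ) (m i : ℕ) : ℝ := s + i * ((t - s) / 2 ^ m)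

lemma dyadicPt_succ_sub (s t : ℝ) (m i : ℕ) :
    dyadicPt s t m (i + 1) - dyadicPt s t m i = (t - s) / 2 ^ m := by
  simp only [dyadicPt]; push_cast; ring

lemma dyadicPt_succ_two_mul (s t : ℝ) (m i : ℕ) :
    dyadicPt s t (m + 1) (2 * i) = dyadicPt s t m i := by
  simp only [dyadicPt]; push_cast; rw [pow_succ]; field_simp

lemma dyadicPt_mono {s t : ℝ} (hst : s ≤ t) (m : ℕ) : Monotone (dyadicPt s t m) :=
  fun _ _ hij => by unfold dyadicPt; gcongr

lemma dyadicPt_zero (s t : ℝ) (m : ℕ) : dyadicPt s t m 0 = s := by simp [dyadicPt]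

lemma dyadicPt_two_pow (s t : ℝ) (m : ℕ) : dyadicPt s t m (2 ^ m) = t := by
  simp only [dyadicPt]; push_cast; field_simp; ring

lemma dyadicPt_mem_Icc {s t : ℝ} (hst : s ≤ t) {m i : ℕ} (hi : i ≤ 2 ^ m) :
    dyadicPt s t m i ∈ Set.Icc s t :=
  ⟨(dyadicPt_zero s t m).symm.trans_le (dyadicPt_mono hst m (Nat.zero_le i)),
    (dyadicPt_mono hst m hi).trans_eq (dyadicPt_two_pow s t m)⟩

def dyadicPartition {s t : ℝ} (hst : s ≤ t) (m : ℕ) : RSPartition s t where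
  n := 2 ^ m
  pts := dyadicPt s t m
  pos := by positivity
  first := dyadicPt_zero s t m
  last := dyadicPt_two_pow s t m
  mono i _ := dyadicPt_mono hst m i.le_succ

def dyadicSum (g : ℝ → ℝ → E) (s t : ℝ) (m : ℕ) : E :=
  ∑ i ∈ range (2 ^ m), g (dyadicPt s t m i) (dyadicPt s t m (i + 1))

lemma dyadicSum_zero (g : ℝ → ℝ → E) (s t : ℝ) : dyadicSum g s t 0 = g s t := by
  simp [dyadicSum, dyadicPt]

lemma dyadicSum_sub (f g : ℝ → ℝ → E) (s t : ℝ) (m : ℕ) :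
    dyadicSum (fun u v => f u v - g u v) s t m = dyadicSum f s t m - dyadicSum g s t m :=
  sum_sub_distrib ..

lemma dyadicSum_succ_sub (g : ℝ → ℝ → E) (s t : ℝ) (m : ℕ) :
    dyadicSum g s t (m + 1) - dyadicSum g s t m = ∑ i ∈ range (2 ^ m),
      (g (dyadicPt s t m i) (dyadicPt s t (m + 1) (2 * i + 1))
        + g (dyadicPt s t (m + 1) (2 * i + 1)) (dyadicPt s t m (i + 1))
        - g (dyadicPt s t m i) (dyadicPt s t m (i + 1))) := by
  rw [dyadicSum, dyadicSum, pow_succ, mul_comm, sum_range_two_mul, ← sum_sub_distrib]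
  refine sum_congr rfl fun i _ => ?_
  rw [dyadicPt_succ_two_mul, show 2 * i + 1 + 1 = 2 * (i + 1) by ring, dyadicPt_succ_two_mul]

lemma RSLimit.tendsto_dyadicSum {g : ℝ → ℝ → E} {J : E} {s t : ℝ} (h : RSLimit s t g J)
    (hst : s ≤ t) : Tendsto (dyadicSum g s t) atTop (𝓝 J) := by
  have hmesh : Tendsto (fun m : ℕ => (t - s) / 2 ^ m) atTop (𝓝 0) :=
    tendsto_const_nhds.div_atTop (tendsto_pow_atTop_atTop_of_one_lt one_lt_two)
  rw [Metric.tendsto_nhds]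
  intro ε hε
  obtain ⟨δ, hδ, hP⟩ := h (ε / 2) (half_pos hε)
  filter_upwards [hmesh.eventually (eventually_le_nhds hδ)] with m hm
  rw [dist_eq_norm]
  exact (hP (dyadicPartition hst m) fun i _ => (dyadicPt_succ_sub s t m i).trans_le hm).trans_lt
    (half_lt_self hε)

section

variable {g : ℝ → ℝ → E} {s t θ K : ℝ}

lemma norm_dyadicSum_succ_sub_le (hst : s ≤ t)
    (hdef : ∀ u v w, s ≤ u → u ≤ v → v ≤ w → w ≤ t → ‖g u w - g u v - g v w‖ ≤ K * (w - u) ^ θ)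
    (m : ℕ) :
    ‖dyadicSum g s t (m + 1) - dyadicSum g s t m‖ ≤ K * (t - s) ^ θ * (2 ^ (1 - θ)) ^ m := by
  have hterm : ∀ i < 2 ^ m, ‖g (dyadicPt s t m i) (dyadicPt s t (m + 1) (2 * i + 1))
      + g (dyadicPt s t (m + 1) (2 * i + 1)) (dyadicPt s t m (i + 1))
      - g (dyadicPt s t m i) (dyadicPt s t m (i + 1))‖ ≤ K * ((t - s) / 2 ^ m) ^ θ := by
    intro i hi
    have hxy : dyadicPt s t m i ≤ dyadicPt s t (m + 1) (2 * i + 1) := by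
      rw [← dyadicPt_succ_two_mul]; exact dyadicPt_mono hst _ (Nat.le_succ _)
    have hyz : dyadicPt s t (m + 1) (2 * i + 1) ≤ dyadicPt s t m (i + 1) := by
      rw [← dyadicPt_succ_two_mul s t m (i + 1), show 2 * (i + 1) = 2 * i + 1 + 1 by ring]
      exact dyadicPt_mono hst _ (Nat.le_succ _)
    set x := dyadicPt s t m i
    set y := dyadicPt s t (m + 1) (2 * i + 1)
    set z := dyadicPt s t m (i + 1)
    calc ‖g x y + g y z - g x z‖ = ‖g x z - g x y - g y z‖ := by rw [← norm_neg]; congr 1; abel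
      _ ≤ K * (z - x) ^ θ :=
          hdef x y z (dyadicPt_mem_Icc hst hi.le).1 hxy hyz (dyadicPt_mem_Icc hst hi).2
      _ = K * ((t - s) / 2 ^ m) ^ θ := by rw [dyadicPt_succ_sub]
  calc ‖dyadicSum g s t (m + 1) - dyadicSum g s t m‖
      ≤ ∑ _i ∈ range (2 ^ m), K * ((t - s) / 2 ^ m) ^ θ := by
        rw [dyadicSum_succ_sub]
        exact (norm_sum_le _ _).trans (sum_le_sum fun i hi => hterm i (mem_range.mp hi))
    _ = K * (2 ^ m * ((t - s) / 2 ^ m) ^ θ) := by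
        rw [sum_const, card_range, nsmul_eq_mul, Nat.cast_pow, Nat.cast_two]; ring
    _ = K * (t - s) ^ θ * (2 ^ (1 - θ)) ^ m := by
        rw [two_pow_mul_div_two_pow_rpow (sub_nonneg.mpr hst), mul_assoc]

/-- The sewing lemma, along dyadic partitions. -/
theorem norm_sub_le_of_tendsto_dyadicSum {J : E} (hθ : 1 < θ) (hK : 0 ≤ K) (hst : s ≤ t)
    (hJ : Tendsto (dyadicSum g s t) atTop (𝓝 J))
    (hdef : ∀ u v w, s ≤ u → u ≤ v → v ≤ w → w ≤ t → ‖g u w - g u v - g v w‖ ≤ K * (w - u) ^ θ) :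
    ‖J - g s t‖ ≤ sewingConst θ * K * (t - s) ^ θ := by
  set r : ℝ := 2 ^ (1 - θ)
  have hr : r < 1 := two_rpow_one_sub_lt_one hθ
  have hsum : ∀ m, ‖dyadicSum g s t m - g s t‖ ≤ sewingConst θ * K * (t - s) ^ θ := by
    intro m
    rw [← dyadicSum_zero g s t, ← sum_range_sub]
    calc ‖∑ j ∈ range m, (dyadicSum g s t (j + 1) - dyadicSum g s t j)‖
        ≤ ∑ j ∈ range m, K * (t - s) ^ θ * r ^ j :=
          (norm_sum_le _ _).trans (sum_le_sum fun j _ => norm_dyadicSum_succ_sub_le hst hdef j)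
      _ = K * (t - s) ^ θ * ∑ j ∈ range m, r ^ j := (mul_sum ..).symm
      _ ≤ K * (t - s) ^ θ * (1 - r)⁻¹ := by
          gcongr
          have := geom_sum_Ico_le_of_lt_one (m := 0) (n := m) (by positivity) hr
          rwa [← range_eq_Ico, pow_zero, one_div] at this
      _ = sewingConst θ * K * (t - s) ^ θ := by rw [sewingConst]; ring
  exact le_of_tendsto' (hJ.sub_const _).norm hsum

end

end Sewing

section Tensor

variable {ι κ κ' : Type*}

def tensor (x : EuclideanSpace ℝ ι) (y : EuclideanSpace ℝ κ) : EuclideanSpace ℝ (ι × κ) :=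
  euc fun p => x p.1 * y p.2

@[simp]
lemma tensor_apply (x : EuclideanSpace ℝ ι) (y : EuclideanSpace ℝ κ) (p : ι × κ) :
    tensor x y p = x p.1 * y p.2 := rfl

lemma tensor_zero_left (y : EuclideanSpace ℝ κ) : tensor (0 : EuclideanSpace ℝ ι) y = 0 := by
  ext p; simp

variable [Fintype ι] [Fintype κ] [Fintype κ']

lemma norm_tensor (x : EuclideanSpace ℝ ι) (y : EuclideanSpace ℝ κ) :
    ‖tensor x y‖ = ‖x‖ * ‖y‖ := by
  simp only [EuclideanSpace.norm_eq, tensor_apply, Real.norm_eq_abs, sq_abs,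
    ← Real.sqrt_mul (sum_nonneg fun i _ => sq_nonneg (x i)), Fintype.sum_mul_sum,
    Fintype.sum_prod_type, mul_pow]

lemma norm_tensor_sub_tensor_le (x x' : EuclideanSpace ℝ ι) (y y' : EuclideanSpace ℝ κ) :
    ‖tensor x y - tensor x' y'‖ ≤ ‖x - x'‖ * ‖y‖ + ‖x'‖ * ‖y - y'‖ := by
  have : tensor x y - tensor x' y' = tensor (x - x') y + tensor x' (y - y') := by
    ext p; simp; ring
  rw [this, ← norm_tensor, ← norm_tensor]
  exact norm_add_le _ _

/-- `q ⊗ y`, indexed by `ι × κ × κ'` rather than `(ι × κ) × κ'`. -/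
def tensorAssoc (q : EuclideanSpace ℝ (ι × κ)) (y : EuclideanSpace ℝ κ') :
    EuclideanSpace ℝ (ι × κ × κ') :=
  LinearIsometryEquiv.piLpCongrLeft 2 ℝ ℝ (Equiv.prodAssoc ι κ κ') (tensor q y)

@[simp]
lemma tensorAssoc_apply (q : EuclideanSpace ℝ (ι × κ)) (y : EuclideanSpace ℝ κ')
    (p : ι × κ × κ') : tensorAssoc q y p = q (p.1, p.2.1) * y p.2.2 := by
  simp [tensorAssoc, LinearIsometryEquiv.piLpCongrLeft_apply]

lemma norm_tensorAssoc_sub_tensorAssoc (q q' : EuclideanSpace ℝ (ι × κ))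
    (y y' : EuclideanSpace ℝ κ') :
    ‖tensorAssoc q y - tensorAssoc q' y'‖ = ‖tensor q y - tensor q' y'‖ := by
  rw [tensorAssoc, tensorAssoc, ← map_sub, LinearIsometryEquiv.norm_map]

end Tensor

section Level3

variable {ι κ₁ κ₂ : Type*}

/-- The `ijk`-component of the germ `Ξ¹_{s,u} ⊗ Ξ²_{u,v} + Ξ²_{s,u} ⊗ Ξ¹_{u,v}`, where
`A = π_i Ξ¹`, `P = π_{jk} Ξ²`, `Q = π_{ij} Ξ²` and `C = π_k Ξ¹`. -/
def level3Germ (A : ℝ → ℝ → EuclideanSpace ℝ ι) (P : ℝ → ℝ → EuclideanSpace ℝ (κ₁ × κ₂))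
    (Q : ℝ → ℝ → EuclideanSpace ℝ (ι × κ₁)) (C : ℝ → ℝ → EuclideanSpace ℝ κ₂) (s u v : ℝ) :
    EuclideanSpace ℝ (ι × κ₁ × κ₂) :=
  euc fun p => A s u p.1 * P u v (p.2.1, p.2.2) + Q s u (p.1, p.2.1) * C u v p.2.2

/-- Chen's relations among the data of `level3Germ A P Q C`, where `B' = π_j Ξ¹`. -/
structure Level3Chen (T : ℝ) (A : ℝ → ℝ → EuclideanSpace ℝ ι) (B' : ℝ → ℝ → EuclideanSpace ℝ κ₁)
    (C : ℝ → ℝ → EuclideanSpace ℝ κ₂) (P : ℝ → ℝ → EuclideanSpace ℝ (κ₁ × κ₂))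
    (Q : ℝ → ℝ → EuclideanSpace ℝ (ι × κ₁)) : Prop where
  chen_A : ∀ s u t, 0 ≤ s → s ≤ u → u ≤ t → t ≤ T → A s t = A s u + A u t
  chen_C : ∀ s u t, 0 ≤ s → s ≤ u → u ≤ t → t ≤ T → C s t = C s u + C u t
  chen_P : ∀ s u t, 0 ≤ s → s ≤ u → u ≤ t → t ≤ T →
    P s t = P s u + P u t + tensor (B' s u) (C u t)
  chen_Q : ∀ s u t, 0 ≤ s → s ≤ u → u ≤ t → t ≤ T →
    Q s t = Q s u + Q u t + tensor (A s u) (B' u t)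

namespace Level3Chen

variable {T : ℝ} {A : ℝ → ℝ → EuclideanSpace ℝ ι} {B' : ℝ → ℝ → EuclideanSpace ℝ κ₁}
  {C : ℝ → ℝ → EuclideanSpace ℝ κ₂} {P : ℝ → ℝ → EuclideanSpace ℝ (κ₁ × κ₂)}
  {Q : ℝ → ℝ → EuclideanSpace ℝ (ι × κ₁)}

lemma level3Germ_self_eq_zero (h : Level3Chen T A B' C P Q) {s : ℝ} (hs : 0 ≤ s) (hsT : s ≤ T)
    (v : ℝ) : level3Germ A P Q C s s v = 0 := by
  have hA : A s s = 0 := left_eq_add.mp (h.chen_A s s s hs le_rfl le_rfl hsT)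
  have hQ := h.chen_Q s s s hs le_rfl le_rfl hsT
  rw [hA, tensor_zero_left, add_zero, left_eq_add] at hQ
  ext p
  simp [level3Germ, euc, hA, hQ]

lemma level3Germ_defect [Fintype ι] [Fintype κ₁] [Fintype κ₂] (h : Level3Chen T A B' C P Q)
    {s u v w : ℝ} (hs : 0 ≤ s) (hsu : s ≤ u) (huv : u ≤ v) (hvw : v ≤ w) (hwT : w ≤ T) :
    level3Germ A P Q C s u w - level3Germ A P Q C s u v - level3Germ A P Q C s v w
      = -(tensor (A u v) (P v w) + tensorAssoc (Q u v) (C v w)) := by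
  have hu : 0 ≤ u := hs.trans hsu
  have hvT : v ≤ T := hvw.trans hwT
  ext ⟨i, j, k⟩
  have hA : A s v i = A s u i + A u v i := by rw [h.chen_A s u v hs hsu huv hvT]; rfl
  have hC : C u w k = C u v k + C v w k := by rw [h.chen_C u v w hu huv hvw hwT]; rfl
  have hP : P u w (j, k) = P u v (j, k) + P v w (j, k) + B' u v j * C v w k := by
    rw [h.chen_P u v w hu huv hvw hwT]; rfl
  have hQ : Q s v (i, j) = Q s u (i, j) + Q u v (i, j) + A s u i * B' u v j := by
    rw [h.chen_Q s u v hs hsu huv hvT]; rfl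
  simp only [level3Germ, euc, PiLp.sub_apply, PiLp.neg_apply, PiLp.add_apply, tensor_apply,
    tensorAssoc_apply]
  linear_combination A s u i * hP + Q s u (i, j) * hC - P v w (j, k) * hA - C v w k * hQ

end Level3Chen

end Level3

lemma rpow_mul_rpow_le_rpow_add {x y z p q : ℝ} (hx : 0 ≤ x) (hxz : x ≤ z) (hy : 0 ≤ y)
    (hyz : y ≤ z) (hp : 0 ≤ p) (hq : 0 ≤ q) : x ^ p * y ^ q ≤ z ^ (p + q) := by
  have hz : 0 ≤ z := hx.trans hxz
  rw [Real.rpow_add_of_nonneg hz hp hq]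
  gcongr

lemma HolderBnd2.mono {E : Type*} [NormedAddCommGroup E] {C C' δ a b : ℝ} {η : ℝ → ℝ → E}
    (h : HolderBnd2 C δ a b η) (hC : C ≤ C') : HolderBnd2 C' δ a b η :=
  fun s t hs hst ht => (h s t hs hst ht).trans <| by
    have := sub_nonneg.mpr hst
    gcongr

lemma norm_tensor_sub_tensor_le_of_holderBnd2 {ι κ : Type*} [Fintype ι] [Fintype κ]
    {X X' : ℝ → ℝ → EuclideanSpace ℝ ι} {Y Y' : ℝ → ℝ → EuclideanSpace ℝ κ}
    {M ε a b T u v w : ℝ} (hM : 0 ≤ M) (hε : 0 ≤ ε) (ha : 0 ≤ a) (hb : 0 ≤ b)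
    (hX' : HolderBnd2 M a 0 T X') (hY : HolderBnd2 M b 0 T Y)
    (hdX : HolderBnd2 ε a 0 T fun s t => X s t - X' s t)
    (hdY : HolderBnd2 ε b 0 T fun s t => Y s t - Y' s t)
    (hu : 0 ≤ u) (huv : u ≤ v) (hvw : v ≤ w) (hw : w ≤ T) :
    ‖tensor (X u v) (Y v w) - tensor (X' u v) (Y' v w)‖ ≤ 2 * M * ε * (w - u) ^ (a + b) := by
  have hv : 0 ≤ v := hu.trans huv
  have hvT : v ≤ T := hvw.trans hw
  calc ‖tensor (X u v) (Y v w) - tensor (X' u v) (Y' v w)‖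
      ≤ ‖X u v - X' u v‖ * ‖Y v w‖ + ‖X' u v‖ * ‖Y v w - Y' v w‖ :=
        norm_tensor_sub_tensor_le _ _ _ _
    _ ≤ ε * (v - u) ^ a * (M * (w - v) ^ b) + M * (v - u) ^ a * (ε * (w - v) ^ b) := by
        have := sub_nonneg.mpr huv
        gcongr
        exacts [hdX u v hu huv hvT, hY v w hv hvw hw, hX' u v hu huv hvT, hdY v w hv hvw hw]
    _ = 2 * M * ε * ((v - u) ^ a * (w - v) ^ b) := by ring
    _ ≤ 2 * M * ε * (w - u) ^ (a + b) := by
        gcongr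
        exact rpow_mul_rpow_le_rpow_add (by linarith) (by linarith) (by linarith) (by linarith)
          ha hb

variable {ι κ₁ κ₂ : Type*} [Fintype ι] [Fintype κ₁] [Fintype κ₂] in
theorem holderBnd2_sub_of_rsLimit_level3Germ
    {A At : ℝ → ℝ → EuclideanSpace ℝ ι} {B' Bt' : ℝ → ℝ → EuclideanSpace ℝ κ₁}
    {C Ct : ℝ → ℝ → EuclideanSpace ℝ κ₂} {P Pt : ℝ → ℝ → EuclideanSpace ℝ (κ₁ × κ₂)}
    {Q Qt : ℝ → ℝ → EuclideanSpace ℝ (ι × κ₁)}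
    {X Xt : ℝ → ℝ → EuclideanSpace ℝ (ι × κ₁ × κ₂)} {T M ε a b q c θ : ℝ}
    (hM : 0 ≤ M) (hε : 0 ≤ ε) (ha : 0 ≤ a) (hb : 0 ≤ b) (hq : 0 ≤ q) (hc : 0 ≤ c)
    (hab : a + b = θ) (hqc : q + c = θ) (hθ : 1 < θ)
    (hchen : Level3Chen T A B' C P Q) (hchent : Level3Chen T At Bt' Ct Pt Qt)
    (hP : HolderBnd2 M b 0 T P) (hC : HolderBnd2 M c 0 T C)
    (hAt : HolderBnd2 M a 0 T At) (hQt : HolderBnd2 M q 0 T Qt)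
    (hdA : HolderBnd2 ε a 0 T fun s t => A s t - At s t)
    (hdP : HolderBnd2 ε b 0 T fun s t => P s t - Pt s t)
    (hdQ : HolderBnd2 ε q 0 T fun s t => Q s t - Qt s t)
    (hdC : HolderBnd2 ε c 0 T fun s t => C s t - Ct s t)
    (hX : ∀ s t, 0 ≤ s → s ≤ t → t ≤ T → RSLimit s t (level3Germ A P Q C s) (X s t))
    (hXt : ∀ s t, 0 ≤ s → s ≤ t → t ≤ T → RSLimit s t (level3Germ At Pt Qt Ct s) (Xt s t)) :
    HolderBnd2 (sewingConst θ * (4 * M) * ε) θ 0 T fun s t => X s t - Xt s t := by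
  intro s t hs hst ht
  have hsT : s ≤ T := hst.trans ht
  have hdiag : level3Germ A P Q C s s t - level3Germ At Pt Qt Ct s s t = 0 := by
    rw [hchen.level3Germ_self_eq_zero hs hsT, hchent.level3Germ_self_eq_zero hs hsT, sub_zero]
  have hJ : Tendsto (dyadicSum (fun u v => level3Germ A P Q C s u v - level3Germ At Pt Qt Ct s u v)
      s t) atTop (𝓝 (X s t - Xt s t)) := by
    refine (tendsto_congr fun m => dyadicSum_sub _ _ s t m).mpr ?_
    exact ((hX s t hs hst ht).tendsto_dyadicSum hst).sub ((hXt s t hs hst ht).tendsto_dyadicSum hst)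
  have hdef : ∀ u v w, s ≤ u → u ≤ v → v ≤ w → w ≤ t →
      ‖(level3Germ A P Q C s u w - level3Germ At Pt Qt Ct s u w)
        - (level3Germ A P Q C s u v - level3Germ At Pt Qt Ct s u v)
        - (level3Germ A P Q C s v w - level3Germ At Pt Qt Ct s v w)‖
      ≤ 4 * M * ε * (w - u) ^ θ := by
    intro u v w hsu huv hvw hwt
    have hu : 0 ≤ u := hs.trans hsu
    have hwT : w ≤ T := hwt.trans ht
    rw [show ∀ x x' y y' z z' : EuclideanSpace ℝ (ι × κ₁ × κ₂),
        (x - x') - (y - y') - (z - z') = (x - y - z) - (x' - y' - z') by intros; abel,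
      hchen.level3Germ_defect hs hsu huv hvw hwT, hchent.level3Germ_defect hs hsu huv hvw hwT]
    calc _ = ‖(tensor (A u v) (P v w) - tensor (At u v) (Pt v w))
            + (tensorAssoc (Q u v) (C v w) - tensorAssoc (Qt u v) (Ct v w))‖ := by
          rw [← norm_neg]; congr 1; abel
      _ ≤ 2 * M * ε * (w - u) ^ (a + b) + 2 * M * ε * (w - u) ^ (q + c) := by
          refine (norm_add_le _ _).trans (add_le_add ?_ ?_)
          · exact norm_tensor_sub_tensor_le_of_holderBnd2 hM hε ha hb hAt hP hdA hdP hu huv hvw hwT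
          · rw [norm_tensorAssoc_sub_tensorAssoc]
            exact norm_tensor_sub_tensor_le_of_holderBnd2 hM hε hq hc hQt hC hdQ hdC hu huv hvw hwT
      _ = 4 * M * ε * (w - u) ^ θ := by rw [hab, hqc]; ring
  have := norm_sub_le_of_tendsto_dyadicSum hθ (by positivity) hst hJ hdef
  rwa [hdiag, sub_zero, ← mul_assoc] at this

theorem statement11_general (α γ : ℝ) (hα1 : 1/4 < α) (hα2 : α ≤ 1/3)
    (hαγ : 1 < 2 * α + γ)
    (M : ℝ) (hM : 0 < M) :
    ∃ C' > (0:ℝ),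
      ∀ (d e : ℕ) (T : ℝ), 0 < T →
      ∀ (B1 Bt1 : ℝ → ℝ → EuclideanSpace ℝ (Fin d))
        (W1 Wt1 : ℝ → ℝ → EuclideanSpace ℝ (Fin e))
        (B2 Bt2 : ℝ → ℝ → EuclideanSpace ℝ (Fin d × Fin d))
        (W2 Wt2 : ℝ → ℝ → EuclideanSpace ℝ (Fin e × Fin e))
        (IBW ItBW : ℝ → ℝ → EuclideanSpace ℝ (Fin d × Fin e))
        (IWB ItWB : ℝ → ℝ → EuclideanSpace ℝ (Fin e × Fin d))
        (B3 Bt3 : ℝ → ℝ → EuclideanSpace ℝ (Fin d × Fin d × Fin d)),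
        -- continuity
        ContinuousOn (fun p : ℝ × ℝ => B1 p.1 p.2) (simplex T) →
        ContinuousOn (fun p : ℝ × ℝ => W1 p.1 p.2) (simplex T) →
        ContinuousOn (fun p : ℝ × ℝ => B2 p.1 p.2) (simplex T) →
        ContinuousOn (fun p : ℝ × ℝ => W2 p.1 p.2) (simplex T) →
        ContinuousOn (fun p : ℝ × ℝ => IBW p.1 p.2) (simplex T) →
        ContinuousOn (fun p : ℝ × ℝ => IWB p.1 p.2) (simplex T) →
        ContinuousOn (fun p : ℝ × ℝ => B3 p.1 p.2) (simplex T) →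
        ContinuousOn (fun p : ℝ × ℝ => Bt1 p.1 p.2) (simplex T) →
        ContinuousOn (fun p : ℝ × ℝ => Wt1 p.1 p.2) (simplex T) →
        ContinuousOn (fun p : ℝ × ℝ => Bt2 p.1 p.2) (simplex T) →
        ContinuousOn (fun p : ℝ × ℝ => Wt2 p.1 p.2) (simplex T) →
        ContinuousOn (fun p : ℝ × ℝ => ItBW p.1 p.2) (simplex T) →
        ContinuousOn (fun p : ℝ × ℝ => ItWB p.1 p.2) (simplex T) →
        ContinuousOn (fun p : ℝ × ℝ => Bt3 p.1 p.2) (simplex T) →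
        -- common Hölder bound `M` for both anisotropic rough paths
        HolderBnd2 M α 0 T B1 → HolderBnd2 M (2 * α) 0 T B2 →
        HolderBnd2 M (3 * α) 0 T B3 → HolderBnd2 M γ 0 T W1 →
        HolderBnd2 M (2 * γ) 0 T W2 → HolderBnd2 M (α + γ) 0 T IBW →
        HolderBnd2 M (α + γ) 0 T IWB →
        HolderBnd2 M α 0 T Bt1 → HolderBnd2 M (2 * α) 0 T Bt2 →
        HolderBnd2 M (3 * α) 0 T Bt3 → HolderBnd2 M γ 0 T Wt1 →
        HolderBnd2 M (2 * γ) 0 T Wt2 → HolderBnd2 M (α + γ) 0 T ItBW →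
        HolderBnd2 M (α + γ) 0 T ItWB →
        -- Chen's relations for both paths
        (∀ s u t, 0 ≤ s → s ≤ u → u ≤ t → t ≤ T →
          B1 s t = B1 s u + B1 u t ∧ W1 s t = W1 s u + W1 u t ∧
          B2 s t = B2 s u + B2 u t + (euc fun p => B1 s u p.1 * B1 u t p.2) ∧
          W2 s t = W2 s u + W2 u t + (euc fun p => W1 s u p.1 * W1 u t p.2) ∧
          IBW s t = IBW s u + IBW u t + (euc fun p => B1 s u p.1 * W1 u t p.2) ∧
          IWB s t = IWB s u + IWB u t + (euc fun p => W1 s u p.1 * B1 u t p.2) ∧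
          B3 s t = B3 s u + B3 u t + (euc fun p => B1 s u p.1 * B2 u t (p.2.1, p.2.2))
            + (euc fun p => B2 s u (p.1, p.2.1) * B1 u t p.2.2)) →
        (∀ s u t, 0 ≤ s → s ≤ u → u ≤ t → t ≤ T →
          Bt1 s t = Bt1 s u + Bt1 u t ∧ Wt1 s t = Wt1 s u + Wt1 u t ∧
          Bt2 s t = Bt2 s u + Bt2 u t + (euc fun p => Bt1 s u p.1 * Bt1 u t p.2) ∧
          Wt2 s t = Wt2 s u + Wt2 u t + (euc fun p => Wt1 s u p.1 * Wt1 u t p.2) ∧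
          ItBW s t = ItBW s u + ItBW u t + (euc fun p => Bt1 s u p.1 * Wt1 u t p.2) ∧
          ItWB s t = ItWB s u + ItWB u t + (euc fun p => Wt1 s u p.1 * Bt1 u t p.2) ∧
          Bt3 s t = Bt3 s u + Bt3 u t
            + (euc fun p => Bt1 s u p.1 * Bt2 u t (p.2.1, p.2.2))
            + (euc fun p => Bt2 s u (p.1, p.2.1) * Bt1 u t p.2.2)) →
        -- the level-3 extensions of the two paths (limits of Riemann-type sums)
        ∀ (X112 Xt112 : ℝ → ℝ → EuclideanSpace ℝ (Fin d × Fin d × Fin e))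
          (X121 Xt121 : ℝ → ℝ → EuclideanSpace ℝ (Fin d × Fin e × Fin d))
          (X211 Xt211 : ℝ → ℝ → EuclideanSpace ℝ (Fin e × Fin d × Fin d))
          (X122 Xt122 : ℝ → ℝ → EuclideanSpace ℝ (Fin d × Fin e × Fin e))
          (X212 Xt212 : ℝ → ℝ → EuclideanSpace ℝ (Fin e × Fin d × Fin e))
          (X221 Xt221 : ℝ → ℝ → EuclideanSpace ℝ (Fin e × Fin e × Fin d))
          (X222 Xt222 : ℝ → ℝ → EuclideanSpace ℝ (Fin e × Fin e × Fin e)),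
          (∀ s t, 0 ≤ s → s ≤ t → t ≤ T →
            RSLimit s t (fun u v => euc fun p : Fin d × Fin d × Fin e =>
              B1 s u p.1 * IBW u v (p.2.1, p.2.2) + B2 s u (p.1, p.2.1) * W1 u v p.2.2)
              (X112 s t) ∧
            RSLimit s t (fun u v => euc fun p : Fin d × Fin e × Fin d =>
              B1 s u p.1 * IWB u v (p.2.1, p.2.2) + IBW s u (p.1, p.2.1) * B1 u v p.2.2)
              (X121 s t) ∧
            RSLimit s t (fun u v => euc fun p : Fin e × Fin d × Fin d =>
              W1 s u p.1 * B2 u v (p.2.1, p.2.2) + IWB s u (p.1, p.2.1) * B1 u v p.2.2)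
              (X211 s t) ∧
            RSLimit s t (fun u v => euc fun p : Fin d × Fin e × Fin e =>
              B1 s u p.1 * W2 u v (p.2.1, p.2.2) + IBW s u (p.1, p.2.1) * W1 u v p.2.2)
              (X122 s t) ∧
            RSLimit s t (fun u v => euc fun p : Fin e × Fin d × Fin e =>
              W1 s u p.1 * IBW u v (p.2.1, p.2.2) + IWB s u (p.1, p.2.1) * W1 u v p.2.2)
              (X212 s t) ∧
            RSLimit s t (fun u v => euc fun p : Fin e × Fin e × Fin d =>
              W1 s u p.1 * IWB u v (p.2.1, p.2.2) + W2 s u (p.1, p.2.1) * B1 u v p.2.2)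
              (X221 s t) ∧
            RSLimit s t (fun u v => euc fun p : Fin e × Fin e × Fin e =>
              W1 s u p.1 * W2 u v (p.2.1, p.2.2) + W2 s u (p.1, p.2.1) * W1 u v p.2.2)
              (X222 s t)) →
          (∀ s t, 0 ≤ s → s ≤ t → t ≤ T →
            RSLimit s t (fun u v => euc fun p : Fin d × Fin d × Fin e =>
              Bt1 s u p.1 * ItBW u v (p.2.1, p.2.2)
                + Bt2 s u (p.1, p.2.1) * Wt1 u v p.2.2) (Xt112 s t) ∧
            RSLimit s t (fun u v => euc fun p : Fin d × Fin e × Fin d =>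
              Bt1 s u p.1 * ItWB u v (p.2.1, p.2.2)
                + ItBW s u (p.1, p.2.1) * Bt1 u v p.2.2) (Xt121 s t) ∧
            RSLimit s t (fun u v => euc fun p : Fin e × Fin d × Fin d =>
              Wt1 s u p.1 * Bt2 u v (p.2.1, p.2.2)
                + ItWB s u (p.1, p.2.1) * Bt1 u v p.2.2) (Xt211 s t) ∧
            RSLimit s t (fun u v => euc fun p : Fin d × Fin e × Fin e =>
              Bt1 s u p.1 * Wt2 u v (p.2.1, p.2.2)
                + ItBW s u (p.1, p.2.1) * Wt1 u v p.2.2) (Xt122 s t) ∧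
            RSLimit s t (fun u v => euc fun p : Fin e × Fin d × Fin e =>
              Wt1 s u p.1 * ItBW u v (p.2.1, p.2.2)
                + ItWB s u (p.1, p.2.1) * Wt1 u v p.2.2) (Xt212 s t) ∧
            RSLimit s t (fun u v => euc fun p : Fin e × Fin e × Fin d =>
              Wt1 s u p.1 * ItWB u v (p.2.1, p.2.2)
                + Wt2 s u (p.1, p.2.1) * Bt1 u v p.2.2) (Xt221 s t) ∧
            RSLimit s t (fun u v => euc fun p : Fin e × Fin e × Fin e =>
              Wt1 s u p.1 * Wt2 u v (p.2.1, p.2.2)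
                + Wt2 s u (p.1, p.2.1) * Wt1 u v p.2.2) (Xt222 s t)) →
          -- the two paths are `ε`-close
          ∀ ε : ℝ, 0 < ε →
            HolderBnd2 ε α 0 T (fun s t => B1 s t - Bt1 s t) →
            HolderBnd2 ε (2 * α) 0 T (fun s t => B2 s t - Bt2 s t) →
            HolderBnd2 ε (3 * α) 0 T (fun s t => B3 s t - Bt3 s t) →
            HolderBnd2 ε γ 0 T (fun s t => W1 s t - Wt1 s t) →
            HolderBnd2 ε (2 * γ) 0 T (fun s t => W2 s t - Wt2 s t) →
            HolderBnd2 ε (α + γ) 0 T (fun s t => IBW s t - ItBW s t) →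
            HolderBnd2 ε (α + γ) 0 T (fun s t => IWB s t - ItWB s t) →
            -- conclusion: `‖Ξ^{3,[ijk]} - Ξ̃^{3,[ijk]}‖_δ ≤ C′ ε`
            HolderBnd2 (C' * ε) (2 * α + γ) 0 T (fun s t => X112 s t - Xt112 s t) ∧
            HolderBnd2 (C' * ε) (2 * α + γ) 0 T (fun s t => X121 s t - Xt121 s t) ∧
            HolderBnd2 (C' * ε) (2 * α + γ) 0 T (fun s t => X211 s t - Xt211 s t) ∧
            HolderBnd2 (C' * ε) (α + 2 * γ) 0 T (fun s t => X122 s t - Xt122 s t) ∧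
            HolderBnd2 (C' * ε) (α + 2 * γ) 0 T (fun s t => X212 s t - Xt212 s t) ∧
            HolderBnd2 (C' * ε) (α + 2 * γ) 0 T (fun s t => X221 s t - Xt221 s t) ∧
            HolderBnd2 (C' * ε) (3 * γ) 0 T (fun s t => X222 s t - Xt222 s t) := by
  have hα : 0 < α := by linarith
  have hγ : 0 < γ := by linarith
  refine ⟨sewingConst (2 * α + γ) * (4 * M), by have := sewingConst_pos hαγ; positivity, ?_⟩
  intro d e T _ B1 Bt1 W1 Wt1 B2 Bt2 W2 Wt2 IBW ItBW IWB ItWB B3 Bt3 _ _ _ _ _ _ _ _ _ _ _ _ _ _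
    hB1 hB2 _ hW1 hW2 hIBW hIWB hBt1 hBt2 _ hWt1 hWt2 hItBW hItWB hchen hchent
    X112 Xt112 X121 Xt121 X211 Xt211 X122 Xt122 X212 Xt212 X221 Xt221 X222 Xt222 hX hXt
    ε hε hdB1 hdB2 _ hdW1 hdW2 hdIBW hdIWB
  simp only [imp_and, forall_and] at hchen hchent hX hXt
  obtain ⟨cB1, cW1, cB2, cW2, cIBW, cIWB, -⟩ := hchen
  obtain ⟨ctB1, ctW1, ctB2, ctW2, ctIBW, ctIWB, -⟩ := hchent
  obtain ⟨l112, l121, l211, l122, l212, l221, l222⟩ := hX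
  obtain ⟨lt112, lt121, lt211, lt122, lt212, lt221, lt222⟩ := hXt
  have hle : ∀ θ, 2 * α + γ ≤ θ →
      sewingConst θ * (4 * M) * ε ≤ sewingConst (2 * α + γ) * (4 * M) * ε := fun θ hθ => by
    have := sewingConst_anti hαγ hθ
    gcongr
  have h2α : 0 ≤ 2 * α := by linarith
  have h2γ : 0 ≤ 2 * γ := by linarith
  have hαγ0 : 0 ≤ α + γ := by linarith
  have hαγ₂ : 1 < α + 2 * γ := by linarith
  have hγ₃ : 1 < 3 * γ := by linarith
  refine ⟨?_, ?_, ?_, ?_, ?_, ?_, ?_⟩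
  · exact (holderBnd2_sub_of_rsLimit_level3Germ hM.le hε.le hα.le hαγ0 h2α hγ.le
      (by ring) (by ring) hαγ ⟨cB1, cW1, cIBW, cB2⟩ ⟨ctB1, ctW1, ctIBW, ctB2⟩
      hIBW hW1 hBt1 hBt2 hdB1 hdIBW hdB2 hdW1 l112 lt112).mono (hle _ le_rfl)
  · exact (holderBnd2_sub_of_rsLimit_level3Germ hM.le hε.le hα.le hαγ0 hαγ0 hα.le
      (by ring) (by ring) hαγ ⟨cB1, cB1, cIWB, cIBW⟩ ⟨ctB1, ctB1, ctIWB, ctIBW⟩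
      hIWB hB1 hBt1 hItBW hdB1 hdIWB hdIBW hdB1 l121 lt121).mono (hle _ le_rfl)
  · exact (holderBnd2_sub_of_rsLimit_level3Germ hM.le hε.le hγ.le h2α hαγ0 hα.le
      (by ring) (by ring) hαγ ⟨cW1, cB1, cB2, cIWB⟩ ⟨ctW1, ctB1, ctB2, ctIWB⟩
      hB2 hB1 hWt1 hItWB hdW1 hdB2 hdIWB hdB1 l211 lt211).mono (hle _ le_rfl)
  · exact (holderBnd2_sub_of_rsLimit_level3Germ hM.le hε.le hα.le h2γ hαγ0 hγ.le
      (by ring) (by ring) hαγ₂ ⟨cB1, cW1, cW2, cIBW⟩ ⟨ctB1, ctW1, ctW2, ctIBW⟩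
      hW2 hW1 hBt1 hItBW hdB1 hdW2 hdIBW hdW1 l122 lt122).mono (hle _ (by linarith))
  · exact (holderBnd2_sub_of_rsLimit_level3Germ hM.le hε.le hγ.le hαγ0 hαγ0 hγ.le
      (by ring) (by ring) hαγ₂ ⟨cW1, cW1, cIBW, cIWB⟩ ⟨ctW1, ctW1, ctIBW, ctIWB⟩
      hIBW hW1 hWt1 hItWB hdW1 hdIBW hdIWB hdW1 l212 lt212).mono (hle _ (by linarith))
  · exact (holderBnd2_sub_of_rsLimit_level3Germ hM.le hε.le hγ.le hαγ0 h2γ hα.le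
      (by ring) (by ring) hαγ₂ ⟨cW1, cB1, cIWB, cW2⟩ ⟨ctW1, ctB1, ctIWB, ctW2⟩
      hIWB hB1 hWt1 hWt2 hdW1 hdIWB hdW2 hdB1 l221 lt221).mono (hle _ (by linarith))
  · exact (holderBnd2_sub_of_rsLimit_level3Germ hM.le hε.le hγ.le h2γ h2γ hγ.le
      (by ring) (by ring) hγ₃ ⟨cW1, cW1, cW2, cW2⟩ ⟨ctW1, ctW1, ctW2, ctW2⟩
      hW2 hW1 hWt1 hWt2 hdW1 hdW2 hdW2 hdW1 l222 lt222).mono (hle _ (by linarith))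

/-- local Lipschitz continuity of the level-3 extension map on
anisotropic rough paths of roughness `(α,γ)`. -/
theorem statement11 (α γ : ℝ) (hα1 : 1/4 < α) (hα2 : α ≤ 1/3)
    (hγ1 : 1/3 < γ) (hγ2 : γ ≤ 1/2) (hαγ : 1 < 2 * α + γ)
    (M : ℝ) (hM : 0 < M) :
    ∃ C' > (0:ℝ),
      ∀ (d e : ℕ) (T : ℝ), 0 < T →
      ∀ (B1 Bt1 : ℝ → ℝ → EuclideanSpace ℝ (Fin d))
        (W1 Wt1 : ℝ → ℝ → EuclideanSpace ℝ (Fin e))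
        (B2 Bt2 : ℝ → ℝ → EuclideanSpace ℝ (Fin d × Fin d))
        (W2 Wt2 : ℝ → ℝ → EuclideanSpace ℝ (Fin e × Fin e))
        (IBW ItBW : ℝ → ℝ → EuclideanSpace ℝ (Fin d × Fin e))
        (IWB ItWB : ℝ → ℝ → EuclideanSpace ℝ (Fin e × Fin d))
        (B3 Bt3 : ℝ → ℝ → EuclideanSpace ℝ (Fin d × Fin d × Fin d)),
        -- continuity
        ContinuousOn (fun p : ℝ × ℝ => B1 p.1 p.2) (simplex T) →
        ContinuousOn (fun p : ℝ × ℝ => W1 p.1 p.2) (simplex T) →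
        ContinuousOn (fun p : ℝ × ℝ => B2 p.1 p.2) (simplex T) →
        ContinuousOn (fun p : ℝ × ℝ => W2 p.1 p.2) (simplex T) →
        ContinuousOn (fun p : ℝ × ℝ => IBW p.1 p.2) (simplex T) →
        ContinuousOn (fun p : ℝ × ℝ => IWB p.1 p.2) (simplex T) →
        ContinuousOn (fun p : ℝ × ℝ => B3 p.1 p.2) (simplex T) →
        ContinuousOn (fun p : ℝ × ℝ => Bt1 p.1 p.2) (simplex T) →
        ContinuousOn (fun p : ℝ × ℝ => Wt1 p.1 p.2) (simplex T) →
        ContinuousOn (fun p : ℝ × ℝ => Bt2 p.1 p.2) (simplex T) →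
        ContinuousOn (fun p : ℝ × ℝ => Wt2 p.1 p.2) (simplex T) →
        ContinuousOn (fun p : ℝ × ℝ => ItBW p.1 p.2) (simplex T) →
        ContinuousOn (fun p : ℝ × ℝ => ItWB p.1 p.2) (simplex T) →
        ContinuousOn (fun p : ℝ × ℝ => Bt3 p.1 p.2) (simplex T) →
        -- common Hölder bound `M` for both anisotropic rough paths
        HolderBnd2 M α 0 T B1 → HolderBnd2 M (2 * α) 0 T B2 →
        HolderBnd2 M (3 * α) 0 T B3 → HolderBnd2 M γ 0 T W1 →
        HolderBnd2 M (2 * γ) 0 T W2 → HolderBnd2 M (α + γ) 0 T IBW →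
        HolderBnd2 M (α + γ) 0 T IWB →
        HolderBnd2 M α 0 T Bt1 → HolderBnd2 M (2 * α) 0 T Bt2 →
        HolderBnd2 M (3 * α) 0 T Bt3 → HolderBnd2 M γ 0 T Wt1 →
        HolderBnd2 M (2 * γ) 0 T Wt2 → HolderBnd2 M (α + γ) 0 T ItBW →
        HolderBnd2 M (α + γ) 0 T ItWB →
        -- Chen's relations for both paths
        (∀ s u t, 0 ≤ s → s ≤ u → u ≤ t → t ≤ T →
          B1 s t = B1 s u + B1 u t ∧ W1 s t = W1 s u + W1 u t ∧
          B2 s t = B2 s u + B2 u t + (euc fun p => B1 s u p.1 * B1 u t p.2) ∧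
          W2 s t = W2 s u + W2 u t + (euc fun p => W1 s u p.1 * W1 u t p.2) ∧
          IBW s t = IBW s u + IBW u t + (euc fun p => B1 s u p.1 * W1 u t p.2) ∧
          IWB s t = IWB s u + IWB u t + (euc fun p => W1 s u p.1 * B1 u t p.2) ∧
          B3 s t = B3 s u + B3 u t + (euc fun p => B1 s u p.1 * B2 u t (p.2.1, p.2.2))
            + (euc fun p => B2 s u (p.1, p.2.1) * B1 u t p.2.2)) →
        (∀ s u t, 0 ≤ s → s ≤ u → u ≤ t → t ≤ T →
          Bt1 s t = Bt1 s u + Bt1 u t ∧ Wt1 s t = Wt1 s u + Wt1 u t ∧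
          Bt2 s t = Bt2 s u + Bt2 u t + (euc fun p => Bt1 s u p.1 * Bt1 u t p.2) ∧
          Wt2 s t = Wt2 s u + Wt2 u t + (euc fun p => Wt1 s u p.1 * Wt1 u t p.2) ∧
          ItBW s t = ItBW s u + ItBW u t + (euc fun p => Bt1 s u p.1 * Wt1 u t p.2) ∧
          ItWB s t = ItWB s u + ItWB u t + (euc fun p => Wt1 s u p.1 * Bt1 u t p.2) ∧
          Bt3 s t = Bt3 s u + Bt3 u t
            + (euc fun p => Bt1 s u p.1 * Bt2 u t (p.2.1, p.2.2))
            + (euc fun p => Bt2 s u (p.1, p.2.1) * Bt1 u t p.2.2)) →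
        -- the level-3 extensions of the two paths (limits of Riemann-type sums)
        ∀ (X112 Xt112 : ℝ → ℝ → EuclideanSpace ℝ (Fin d × Fin d × Fin e))
          (X121 Xt121 : ℝ → ℝ → EuclideanSpace ℝ (Fin d × Fin e × Fin d))
          (X211 Xt211 : ℝ → ℝ → EuclideanSpace ℝ (Fin e × Fin d × Fin d))
          (X122 Xt122 : ℝ → ℝ → EuclideanSpace ℝ (Fin d × Fin e × Fin e))
          (X212 Xt212 : ℝ → ℝ → EuclideanSpace ℝ (Fin e × Fin d × Fin e))
          (X221 Xt221 : ℝ → ℝ → EuclideanSpace ℝ (Fin e × Fin e × Fin d))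
          (X222 Xt222 : ℝ → ℝ → EuclideanSpace ℝ (Fin e × Fin e × Fin e)),
          (∀ s t, 0 ≤ s → s ≤ t → t ≤ T →
            RSLimit s t (fun u v => euc fun p : Fin d × Fin d × Fin e =>
              B1 s u p.1 * IBW u v (p.2.1, p.2.2) + B2 s u (p.1, p.2.1) * W1 u v p.2.2)
              (X112 s t) ∧
            RSLimit s t (fun u v => euc fun p : Fin d × Fin e × Fin d =>
              B1 s u p.1 * IWB u v (p.2.1, p.2.2) + IBW s u (p.1, p.2.1) * B1 u v p.2.2)
              (X121 s t) ∧
            RSLimit s t (fun u v => euc fun p : Fin e × Fin d × Fin d =>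
              W1 s u p.1 * B2 u v (p.2.1, p.2.2) + IWB s u (p.1, p.2.1) * B1 u v p.2.2)
              (X211 s t) ∧
            RSLimit s t (fun u v => euc fun p : Fin d × Fin e × Fin e =>
              B1 s u p.1 * W2 u v (p.2.1, p.2.2) + IBW s u (p.1, p.2.1) * W1 u v p.2.2)
              (X122 s t) ∧
            RSLimit s t (fun u v => euc fun p : Fin e × Fin d × Fin e =>
              W1 s u p.1 * IBW u v (p.2.1, p.2.2) + IWB s u (p.1, p.2.1) * W1 u v p.2.2)
              (X212 s t) ∧
            RSLimit s t (fun u v => euc fun p : Fin e × Fin e × Fin d =>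
              W1 s u p.1 * IWB u v (p.2.1, p.2.2) + W2 s u (p.1, p.2.1) * B1 u v p.2.2)
              (X221 s t) ∧
            RSLimit s t (fun u v => euc fun p : Fin e × Fin e × Fin e =>
              W1 s u p.1 * W2 u v (p.2.1, p.2.2) + W2 s u (p.1, p.2.1) * W1 u v p.2.2)
              (X222 s t)) →
          (∀ s t, 0 ≤ s → s ≤ t → t ≤ T →
            RSLimit s t (fun u v => euc fun p : Fin d × Fin d × Fin e =>
              Bt1 s u p.1 * ItBW u v (p.2.1, p.2.2)
                + Bt2 s u (p.1, p.2.1) * Wt1 u v p.2.2) (Xt112 s t) ∧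
            RSLimit s t (fun u v => euc fun p : Fin d × Fin e × Fin d =>
              Bt1 s u p.1 * ItWB u v (p.2.1, p.2.2)
                + ItBW s u (p.1, p.2.1) * Bt1 u v p.2.2) (Xt121 s t) ∧
            RSLimit s t (fun u v => euc fun p : Fin e × Fin d × Fin d =>
              Wt1 s u p.1 * Bt2 u v (p.2.1, p.2.2)
                + ItWB s u (p.1, p.2.1) * Bt1 u v p.2.2) (Xt211 s t) ∧
            RSLimit s t (fun u v => euc fun p : Fin d × Fin e × Fin e =>
              Bt1 s u p.1 * Wt2 u v (p.2.1, p.2.2)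
                + ItBW s u (p.1, p.2.1) * Wt1 u v p.2.2) (Xt122 s t) ∧
            RSLimit s t (fun u v => euc fun p : Fin e × Fin d × Fin e =>
              Wt1 s u p.1 * ItBW u v (p.2.1, p.2.2)
                + ItWB s u (p.1, p.2.1) * Wt1 u v p.2.2) (Xt212 s t) ∧
            RSLimit s t (fun u v => euc fun p : Fin e × Fin e × Fin d =>
              Wt1 s u p.1 * ItWB u v (p.2.1, p.2.2)
                + Wt2 s u (p.1, p.2.1) * Bt1 u v p.2.2) (Xt221 s t) ∧
            RSLimit s t (fun u v => euc fun p : Fin e × Fin e × Fin e =>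
              Wt1 s u p.1 * Wt2 u v (p.2.1, p.2.2)
                + Wt2 s u (p.1, p.2.1) * Wt1 u v p.2.2) (Xt222 s t)) →
          -- the two paths are `ε`-close
          ∀ ε : ℝ, 0 < ε →
            HolderBnd2 ε α 0 T (fun s t => B1 s t - Bt1 s t) →
            HolderBnd2 ε (2 * α) 0 T (fun s t => B2 s t - Bt2 s t) →
            HolderBnd2 ε (3 * α) 0 T (fun s t => B3 s t - Bt3 s t) →
            HolderBnd2 ε γ 0 T (fun s t => W1 s t - Wt1 s t) →
            HolderBnd2 ε (2 * γ) 0 T (fun s t => W2 s t - Wt2 s t) →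
            HolderBnd2 ε (α + γ) 0 T (fun s t => IBW s t - ItBW s t) →
            HolderBnd2 ε (α + γ) 0 T (fun s t => IWB s t - ItWB s t) →
            -- conclusion: `‖Ξ^{3,[ijk]} - Ξ̃^{3,[ijk]}‖_δ ≤ C′ ε`
            HolderBnd2 (C' * ε) (2 * α + γ) 0 T (fun s t => X112 s t - Xt112 s t) ∧
            HolderBnd2 (C' * ε) (2 * α + γ) 0 T (fun s t => X121 s t - Xt121 s t) ∧
            HolderBnd2 (C' * ε) (2 * α + γ) 0 T (fun s t => X211 s t - Xt211 s t) ∧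
            HolderBnd2 (C' * ε) (α + 2 * γ) 0 T (fun s t => X122 s t - Xt122 s t) ∧
            HolderBnd2 (C' * ε) (α + 2 * γ) 0 T (fun s t => X212 s t - Xt212 s t) ∧
            HolderBnd2 (C' * ε) (α + 2 * γ) 0 T (fun s t => X221 s t - Xt221 s t) ∧
            HolderBnd2 (C' * ε) (3 * γ) 0 T (fun s t => X222 s t - Xt222 s t) :=
  statement11_general α γ hα1 hα2 hαγ M hM
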